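/- Let q ≥ 2, w ≥ 1 and d be integers with d even and 2 ≤ d ≤ 2w, and set t = (2w-d+2)/2 (so that t = ⌈(2w-d+1)/2⌉). Then for every integer n ≥ w one has A_q(n,d,w) ≤ (q-1)^{t-1}·C(n,t)/C(w,t), where C(a,b) denotes the binomial coefficient. -/

import Mathlib

open Finset

/-- The weight of a vector: the number of nonzero coordinates. -/
def wtv {n : ℕ} (x : Fin n → ℕ) : ℕ := (univ.filter fun i => x i ≠ 0).card

/-- `C` is an `(n,d,w)_q` constant weight code: a code over the alphabet `{0,...,q-1}`
of length `n`, constant weight `w`, and minimum Hamming distance at least `d`. -/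
def IsCWC (q n d w : ℕ) (C : Finset (Fin n → ℕ)) : Prop :=
  (∀ x ∈ C, ∀ i, x i < q) ∧ (∀ x ∈ C, wtv x = w) ∧
  (∀ x ∈ C, ∀ y ∈ C, x ≠ y → d ≤ hammingDist x y)

/-- `Aq q n d w` is the maximum size of an `(n,d,w)_q` constant weight code. -/
noncomputable def Aq (q n d w : ℕ) : ℕ :=
  sSup {m | ∃ C : Finset (Fin n → ℕ), IsCWC q n d w C ∧ C.card = m}

/-!
Double count the pairs `(x, T)` with `x ∈ C` and `T` a `t`-subset of the support of `x`:
there are `|C| * C(w, t)` of them. Two codewords whose supports contain `T` and which agree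
on `T` minus one point differ in at most `2 (w - t) + 1 = d - 1` coordinates, so they are
equal. Hence a codeword with `T` in its support is determined by its `t - 1` nonzero
entries on `T` minus a point, and each of the `C(n, t)` sets `T` occurs in at most
`(q - 1) ^ (t - 1)` pairs.
-/

section Support

variable {ι β : Type*} [Fintype ι] [DecidableEq β] [Zero β]

def coordSupport (x : ι → β) : Finset ι := {i | x i ≠ 0}

@[simp]
theorem mem_coordSupport {x : ι → β} {i : ι} : i ∈ coordSupport x ↔ x i ≠ 0 := by
  simp [coordSupport]

variable [DecidableEq ι]

theorem hammingDist_le_of_eqOn_erase {x y : ι → β} {T : Finset ι} {a : ι}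
    (hx : T ⊆ coordSupport x) (hy : T ⊆ coordSupport y) (hxy : ∀ i ∈ T.erase a, x i = y i) :
    hammingDist x y ≤ (#(coordSupport x) - #T) + (#(coordSupport y) - #T) + 1 := by
  have hsub : ({i | x i ≠ y i} : Finset ι) ⊆
      insert a ((coordSupport x \ T) ∪ (coordSupport y \ T)) := by
    intro i hi
    have hagree := hxy i
    simp only [mem_filter, mem_univ, true_and, mem_erase, mem_insert, mem_union,
      mem_sdiff, mem_coordSupport] at hi hagree ⊢
    grind
  calc hammingDist x y = #{i | x i ≠ y i} := rfl
    _ ≤ #(insert a ((coordSupport x \ T) ∪ (coordSupport y \ T))) := card_le_card hsub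
    _ ≤ #((coordSupport x \ T) ∪ (coordSupport y \ T)) + 1 := card_insert_le _ _
    _ ≤ #(coordSupport x \ T) + #(coordSupport y \ T) + 1 := by gcongr; exact card_union_le _ _
    _ = (#(coordSupport x) - #T) + (#(coordSupport y) - #T) + 1 := by
      rw [card_sdiff_of_subset hx, card_sdiff_of_subset hy]

end Support

theorem card_le_pow_of_restrict_injOn {ι : Type*} [DecidableEq ι] {S : Finset (ι → ℕ)}
    {E : Finset ι} {q : ℕ}
    (hval : ∀ x ∈ S, ∀ i ∈ E, x i ∈ Ioo 0 q)
    (hinj : ∀ x ∈ S, ∀ y ∈ S, (∀ i ∈ E, x i = y i) → x = y) :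
    #S ≤ (q - 1) ^ #E := by
  have hmaps :
      Set.MapsTo (fun (x : ι → ℕ) (i : E) => x i) S (Fintype.piFinset fun _ : E => Ioo 0 q) :=
    fun x hx => Fintype.mem_piFinset.2 fun (i : E) => hval x hx i.1 i.2
  have hinjOn : Set.InjOn (fun (x : ι → ℕ) (i : E) => x i) S :=
    fun x hx y hy hxy => hinj x hx y hy fun i hi => congrFun hxy ⟨i, hi⟩
  calc #S ≤ #(Fintype.piFinset fun _ : E => Ioo 0 q) := card_le_card_of_injOn _ hmaps hinjOn
    _ = (q - 1) ^ #E := by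
      rw [Fintype.card_piFinset, prod_const, Nat.card_Ioo, card_univ, Fintype.card_coe,
        Nat.sub_zero]

namespace IsCWC

variable {q n d w : ℕ} {C : Finset (Fin n → ℕ)}

theorem card_filter_superset_le (hC : IsCWC q n d w C) {T : Finset (Fin n)} (hT : T.Nonempty)
    (hdT : 2 * w + 2 ≤ d + 2 * #T) :
    #{x ∈ C | T ⊆ coordSupport x} ≤ (q - 1) ^ (#T - 1) := by
  obtain ⟨a, ha⟩ := hT
  rw [← card_erase_of_mem ha]
  apply card_le_pow_of_restrict_injOn
  · intro x hx i hi
    obtain ⟨hxC, hxT⟩ := mem_filter.1 hx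
    have hxi : x i ≠ 0 := mem_coordSupport.1 (hxT (mem_of_mem_erase hi))
    exact mem_Ioo.2 ⟨Nat.pos_of_ne_zero hxi, hC.1 x hxC i⟩
  · intro x hx y hy hxy
    obtain ⟨hxC, hxT⟩ := mem_filter.1 hx
    obtain ⟨hyC, hyT⟩ := mem_filter.1 hy
    by_contra hne
    have hdist := hammingDist_le_of_eqOn_erase hxT hyT hxy
    have hTw : #T ≤ #(coordSupport x) := card_le_card hxT
    have hwx : #(coordSupport x) = w := hC.2.1 x hxC
    have hwy : #(coordSupport y) = w := hC.2.1 y hyC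
    have hd := hC.2.2 x hxC y hyC hne
    omega

theorem card_mul_choose_le {t : ℕ} (hC : IsCWC q n d w C) (ht : 1 ≤ t)
    (hdt : 2 * w + 2 ≤ d + 2 * t) :
    #C * w.choose t ≤ n.choose t * (q - 1) ^ (t - 1) := by
  let r : (Fin n → ℕ) → Finset (Fin n) → Prop := fun x T => T ⊆ coordSupport x
  have hcount := card_mul_le_card_mul r (s := C) (t := powersetCard t univ)
    (m := w.choose t) (n := (q - 1) ^ (t - 1)) (fun x hx => ?_) (fun T hT => ?_)
  · rwa [card_powersetCard, card_univ, Fintype.card_fin] at hcount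
  · have hsets : (powersetCard t univ).bipartiteAbove r x = powersetCard t (coordSupport x) := by
      ext T
      simp [bipartiteAbove, r, mem_powersetCard, and_comm]
    rw [hsets, card_powersetCard]
    exact (congrArg (Nat.choose · t) (hC.2.1 x hx)).ge
  · have hTcard : #T = t := (mem_powersetCard.1 hT).2
    have hT : T.Nonempty := card_pos.1 (by omega)
    simpa only [bipartiteBelow, hTcard] using card_filter_superset_le hC hT (by omega)

end IsCWC

theorem Aq_le_of_forall_card_le {q n d w m : ℕ}
    (h : ∀ C : Finset (Fin n → ℕ), IsCWC q n d w C → #C ≤ m) : Aq q n d w ≤ m :=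
  csSup_le ⟨0, ∅, ⟨by simp, by simp, by simp⟩, rfl⟩ (by rintro _ ⟨C, hC, rfl⟩; exact h C hC)

theorem stmt7_general (q w d t : ℕ) (hq : 2 ≤ q)
    (hd1 : 2 ≤ d) (hd2 : d ≤ 2 * w) (ht : 2 * t = 2 * w - d + 2) :
    ∀ n : ℕ, w ≤ n →
      (Aq q n d w : ℝ) ≤
        ((q : ℝ) - 1) ^ (t - 1) * (Nat.choose n t : ℝ) / (Nat.choose w t : ℝ) := by
  intro n _
  have hchoose : 0 < w.choose t := Nat.choose_pos (by omega)
  have hAq : Aq q n d w ≤ n.choose t * (q - 1) ^ (t - 1) / w.choose t :=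
    Aq_le_of_forall_card_le fun C hC =>
      (Nat.le_div_iff_mul_le hchoose).2 (hC.card_mul_choose_le (by omega) (by omega))
  calc (Aq q n d w : ℝ) ≤ ((n.choose t * (q - 1) ^ (t - 1) / w.choose t : ℕ) : ℝ) := by
        exact_mod_cast hAq
    _ ≤ ((n.choose t * (q - 1) ^ (t - 1) : ℕ) : ℝ) / (w.choose t : ℝ) := Nat.cast_div_le
    _ = ((q : ℝ) - 1) ^ (t - 1) * (Nat.choose n t : ℝ) / (Nat.choose w t : ℝ) := by
      push_cast [Nat.cast_sub (by omega : 1 ≤ q)]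
      ring

theorem stmt7 (q w d t : ℕ) (hq : 2 ≤ q) (hw : 1 ≤ w) (heven : Even d)
    (hd1 : 2 ≤ d) (hd2 : d ≤ 2 * w) (ht : 2 * t = 2 * w - d + 2) :
    ∀ n : ℕ, w ≤ n →
      (Aq q n d w : ℝ) ≤
        ((q : ℝ) - 1) ^ (t - 1) * (Nat.choose n t : ℝ) / (Nat.choose w t : ℝ) :=
  stmt7_general q w d t hq hd1 hd2 ht
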